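/- Let c^i_{jk} be smooth structure functions on an open set U ⊆ ℝ^n, symmetric in (j,k), let Γ^i_{jk} be a torsionless connection satisfying the symmetry condition ∇_l c^i_{jk} = ∇_j c^i_{lk}, and let X, Y be smooth vector fields that are flat: ∇_j X^i = 0 and ∇_j Y^i = 0 for all i,j. Then (Lie_X c)^i_{pq} Y^q − (Lie_Y c)^i_{pq} X^q + c^i_{pq} [X,Y]^q = 0 for all i,p; in particular the primary flows commute. -/
import Mathlib


open scoped BigOperators

noncomputable section

/-- Vector fields on (an open subset of) `ℝⁿ`, given by their components. -/
abbrev VF (n : ℕ) := Fin n → (Fin n → ℝ) → ℝ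

/-- Structure functions `c^i_{jk}` (and also Christoffel symbols `Γ^i_{jk}`). -/
abbrev SC (n : ℕ) := Fin n → Fin n → Fin n → (Fin n → ℝ) → ℝ

/-- Partial derivative `∂_j f` at `x`. -/
def pd {n : ℕ} (f : (Fin n → ℝ) → ℝ) (j : Fin n) (x : Fin n → ℝ) : ℝ :=
  fderiv ℝ f x (Pi.single j 1)

/-- The Lie bracket `[X,Y]^i = X^j ∂_j Y^i − Y^j ∂_j X^i`. -/
def lieB {n : ℕ} (X Y : VF n) : VF n :=
  fun i x => ∑ j, (X j x * pd (Y i) j x - Y j x * pd (X i) j x)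

/-- The Lie derivative of `c` along `X`:
`(Lie_X c)^i_{jk} = X^s ∂_s c^i_{jk} − (∂_s X^i) c^s_{jk} + (∂_j X^s) c^i_{sk} + (∂_k X^s) c^i_{js}`. -/
def liec {n : ℕ} (c : SC n) (X : VF n) (i j k : Fin n) (x : Fin n → ℝ) : ℝ :=
  ∑ s, (X s x * pd (c i j k) s x - pd (X i) s x * c s j k x
    + pd (X s) j x * c i s k x + pd (X s) k x * c i j s x)

/-- Covariant derivative of a vector field: `∇_j X^i = ∂_j X^i + Γ^i_{jk} X^k`. -/
def nablaV {n : ℕ} (Γ : SC n) (X : VF n) (j i : Fin n) (x : Fin n → ℝ) : ℝ :=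
  pd (X i) j x + ∑ k, Γ i j k x * X k x

/-- Covariant derivative of the structure functions:
`∇_l c^i_{jk} = ∂_l c^i_{jk} + Γ^i_{ls} c^s_{jk} − Γ^s_{lj} c^i_{sk} − Γ^s_{lk} c^i_{js}`. -/
def nablaC {n : ℕ} (Γ c : SC n) (l i j k : Fin n) (x : Fin n → ℝ) : ℝ :=
  pd (c i j k) l x + ∑ s, (Γ i l s x * c s j k x - Γ s l j x * c i s k x - Γ s l k x * c i j s x)

theorem pd_congr' {n : ℕ} {U : Set (Fin n → ℝ)} (hU : IsOpen U)
    {f g : (Fin n → ℝ) → ℝ} (h : ∀ y ∈ U, f y = g y) {x : Fin n → ℝ} (hx : x ∈ U)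
    (j : Fin n) : pd f j x = pd g j x := by
  unfold pd
  rw [Filter.EventuallyEq.fderiv_eq (Filter.eventuallyEq_of_mem (hU.mem_nhds hx) h)]

theorem dswap' {n : ℕ} (f : Fin n → Fin n → ℝ) :
    ∑ j, ∑ k, f j k = ∑ j, ∑ k, f k j := Finset.sum_comm

theorem sum_antisym_zero' {n : ℕ} (f : Fin n → Fin n → ℝ) (h : ∀ j k, f j k = - f k j) :
    ∑ j, ∑ k, f j k = 0 := by
  have h1 : ∑ j, ∑ k, f j k = ∑ j, ∑ k, -f j k := by
    rw [dswap' f]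
    exact Finset.sum_congr rfl fun j _ => Finset.sum_congr rfl fun k _ => h k j
  simp only [Finset.sum_neg_distrib] at h1
  linarith

theorem statement_7 {n : ℕ} (U : Set (Fin n → ℝ)) (hU : IsOpen U)
    (c : SC n)
    (hc_smooth : ∀ i j k, ContDiffOn ℝ (⊤ : ℕ∞) (c i j k) U)
    (hc_comm : ∀ i j k, ∀ x ∈ U, c i j k x = c i k j x)
    (Γ : SC n)
    (hΓ_smooth : ∀ i j k, ContDiffOn ℝ (⊤ : ℕ∞) (Γ i j k) U)
    (hΓ_tor : ∀ i j k, ∀ x ∈ U, Γ i j k x = Γ i k j x)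
    (hsym : ∀ i j k l, ∀ x ∈ U, nablaC Γ c l i j k x = nablaC Γ c j i l k x)
    (X : VF n) (hX : ∀ i, ContDiffOn ℝ (⊤ : ℕ∞) (X i) U)
    (Y : VF n) (hY : ∀ i, ContDiffOn ℝ (⊤ : ℕ∞) (Y i) U)
    (hXflat : ∀ j i, ∀ x ∈ U, nablaV Γ X j i x = 0)
    (hYflat : ∀ j i, ∀ x ∈ U, nablaV Γ Y j i x = 0) :
    ∀ x ∈ U, ∀ i p,
      ∑ q, liec c X i p q x * Y q x - ∑ q, liec c Y i p q x * X q x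
        + ∑ q, c i p q x * lieB X Y q x = 0 := by
  intro x hx i p
  have hDX : ∀ a b, pd (X a) b x = -∑ t, Γ a b t x * X t x := by
    intro a b
    have h := hXflat b a x hx
    unfold nablaV at h
    linarith
  have hDY : ∀ a b, pd (Y a) b x = -∑ t, Γ a b t x * Y t x := by
    intro a b
    have h := hYflat b a x hx
    unfold nablaV at h
    linarith
  -- the Lie bracket vanishes
  have hlie : ∀ q, lieB X Y q x = 0 := by
    intro q
    have e1 : lieB X Y q x
        = ∑ j, ∑ t, (Y j x * Γ q j t x * X t x - X j x * Γ q j t x * Y t x) := by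
      unfold lieB
      refine Finset.sum_congr rfl fun j _ => ?_
      rw [hDX q j, hDY q j, mul_neg, mul_neg, sub_neg_eq_add, neg_add_eq_sub,
        Finset.mul_sum, Finset.mul_sum, ← Finset.sum_sub_distrib]
      exact Finset.sum_congr rfl fun t _ => by ring
    rw [e1]
    refine sum_antisym_zero' _ fun j t => ?_
    rw [hΓ_tor q t j x hx]
    ring
  -- Lie derivative along a flat field equals contraction with ∇c
  have key : ∀ (Z : VF n), (∀ a b, pd (Z a) b x = -∑ t, Γ a b t x * Z t x) →
      ∀ q, liec c Z i p q x = ∑ s, Z s x * nablaC Γ c s i p q x := by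
    intro Z hDZ q
    have e1 : liec c Z i p q x = ∑ s, Z s x * pd (c i p q) s x
        + ∑ s, ∑ t, (Γ i s t x * Z t x * c s p q x - Γ s p t x * Z t x * c i s q x
            - Γ s q t x * Z t x * c i p s x) := by
      unfold liec
      rw [← Finset.sum_add_distrib]
      refine Finset.sum_congr rfl fun s _ => ?_
      rw [hDZ i s, hDZ s p, hDZ s q]
      simp only [neg_mul, Finset.sum_mul, Finset.sum_sub_distrib, mul_assoc]
      ring
    have e2 : ∑ s, Z s x * nablaC Γ c s i p q x = ∑ s, Z s x * pd (c i p q) s x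
        + ∑ s, ∑ t, Z s x * (Γ i s t x * c t p q x - Γ t s p x * c i t q x
            - Γ t s q x * c i p t x) := by
      rw [← Finset.sum_add_distrib]
      refine Finset.sum_congr rfl fun s _ => ?_
      unfold nablaC
      rw [mul_add, Finset.mul_sum]
    rw [e1, e2]
    congr 1
    rw [dswap']
    refine Finset.sum_congr rfl fun s _ => Finset.sum_congr rfl fun t _ => ?_
    rw [hΓ_tor i t s x hx, hΓ_tor t p s x hx, hΓ_tor t q s x hx]
    ring
  -- ∇c is symmetric in its last two lower indices
  have hlast : ∀ l j k, nablaC Γ c l i j k x = nablaC Γ c l i k j x := by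
    intro l j k
    unfold nablaC
    rw [pd_congr' hU (hc_comm i j k) hx l]
    congr 1
    refine Finset.sum_congr rfl fun s _ => ?_
    rw [hc_comm s j k x hx, hc_comm i s k x hx, hc_comm i j s x hx]
    ring
  have hN : ∀ s q, nablaC Γ c s i p q x = nablaC Γ c q i p s x := by
    intro s q
    rw [hsym i p q s x hx, hlast p s q, hsym i q s p x hx]
  -- assemble
  have h3 : ∑ q, c i p q x * lieB X Y q x = 0 :=
    Finset.sum_eq_zero fun q _ => by rw [hlie q, mul_zero]
  rw [h3, add_zero, sub_eq_zero]
  have eX : ∑ q, liec c X i p q x * Y q x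
      = ∑ q, ∑ s, X s x * nablaC Γ c s i p q x * Y q x :=
    Finset.sum_congr rfl fun q _ => by rw [key X hDX q, Finset.sum_mul]
  have eY : ∑ q, liec c Y i p q x * X q x
      = ∑ q, ∑ s, Y s x * nablaC Γ c s i p q x * X q x :=
    Finset.sum_congr rfl fun q _ => by rw [key Y hDY q, Finset.sum_mul]
  rw [eX, eY, dswap']
  refine Finset.sum_congr rfl fun q _ => Finset.sum_congr rfl fun s _ => ?_
  rw [hN q s]
  ring
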